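/- arXiv:2204.09478 — 2 statements merged into one kernel-verified Lean document; each statement's English description precedes it below -/
import Mathlib

section
/- Let G be a compact Hausdorff topological group with identity e, and let a ∈ G satisfy a² ≠ e. Then the probability measure μ = (1/2)δ_e + (1/2)δ_a has no generalized inverse in P(G): there is no regular Borel probability measure ν on G with μ ∗ ν ∗ μ = μ. -/
open MeasureTheory
open scoped MeasureTheory ENNReal

/-!
With `μ = ½(δ₁ + δₐ)` we get `μ ∗ ν ∗ μ = ¼(ν + aν + νa + aνa)`, so evaluating `μ ∗ ν ∗ μ = μ`
at `1` and at `a` gives `ν{1} + 2ν{a⁻¹} + ν{a⁻²} = 2` and `ν{a} + 2ν{1} + ν{a⁻¹} = 2`.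
Since `1, a⁻¹, a⁻²` are distinct, the first forces `ν{a⁻¹} = 1` and `ν{1} = 0`; the second then
gives `ν{a} + ν{a⁻¹} = 2`, impossible because `a ≠ a⁻¹`.

Without second countability multiplication need not be measurable on `G × G`, so the library's
convolution lemmas (which assume `MeasurableMul₂`) do not apply. Against a Dirac factor, however,
multiplication agrees almost everywhere with a one-sided translation, and that suffices.
-/

namespace MeasureTheory.Measure

section Monoid

variable {M : Type*} [Monoid M] [MeasurableSpace M]

lemma add_mconv' (μ₁ μ₂ ν : Measure M) [SFinite μ₁] [SFinite μ₂] [SFinite ν]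
    (h₁ : AEMeasurable (fun p : M × M => p.1 * p.2) (μ₁.prod ν))
    (h₂ : AEMeasurable (fun p : M × M => p.1 * p.2) (μ₂.prod ν)) :
    (μ₁ + μ₂) ∗ₘ ν = μ₁ ∗ₘ ν + μ₂ ∗ₘ ν := by
  rw [mconv, add_prod, AEMeasurable.map_add₀ h₁ h₂]
  rfl

lemma mconv_add' (μ ν₁ ν₂ : Measure M) [SFinite μ] [SFinite ν₁] [SFinite ν₂]
    (h₁ : AEMeasurable (fun p : M × M => p.1 * p.2) (μ.prod ν₁))
    (h₂ : AEMeasurable (fun p : M × M => p.1 * p.2) (μ.prod ν₂)) :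
    μ ∗ₘ (ν₁ + ν₂) = μ ∗ₘ ν₁ + μ ∗ₘ ν₂ := by
  rw [mconv, prod_add, AEMeasurable.map_add₀ h₁ h₂]
  rfl

variable [MeasurableSingletonClass M]

lemma mul_ae_eq_dirac_prod (x : M) (ν : Measure M) [SFinite ν] :
    (fun p : M × M => p.1 * p.2) =ᵐ[(dirac x).prod ν] fun p => x * p.2 := by
  rw [dirac_prod]
  have hfst : ∀ᵐ p ∂ν.map (Prod.mk x), p.1 = x :=
    (ae_map_iff measurable_prodMk_left.aemeasurable
      (measurable_fst (measurableSet_singleton x))).2 (ae_of_all _ fun _ => rfl)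
  exact hfst.mono fun p hp => by simp only [hp]

lemma mul_ae_eq_prod_dirac (ν : Measure M) [SFinite ν] (x : M) :
    (fun p : M × M => p.1 * p.2) =ᵐ[ν.prod (dirac x)] fun p => p.1 * x := by
  rw [prod_dirac]
  have hsnd : ∀ᵐ p ∂ν.map (fun y => (y, x)), p.2 = x :=
    (ae_map_iff measurable_prodMk_right.aemeasurable
      (measurable_snd (measurableSet_singleton x))).2 (ae_of_all _ fun _ => rfl)
  exact hsnd.mono fun p hp => by simp only [hp]

variable [MeasurableMul M]

lemma aemeasurable_mul_dirac_prod (x : M) (ν : Measure M) [SFinite ν] :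
    AEMeasurable (fun p : M × M => p.1 * p.2) ((dirac x).prod ν) :=
  (measurable_snd.const_mul x).aemeasurable.congr
    (mul_ae_eq_dirac_prod x ν).symm

lemma aemeasurable_mul_prod_dirac (ν : Measure M) [SFinite ν] (x : M) :
    AEMeasurable (fun p : M × M => p.1 * p.2) (ν.prod (dirac x)) :=
  (measurable_fst.mul_const x).aemeasurable.congr
    (mul_ae_eq_prod_dirac ν x).symm

lemma dirac_mconv' (x : M) (ν : Measure M) [SFinite ν] :
    dirac x ∗ₘ ν = ν.map (x * ·) := by
  rw [mconv, map_congr (mul_ae_eq_dirac_prod x ν), dirac_prod,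
    map_map (measurable_snd.const_mul x) measurable_prodMk_left]
  rfl

lemma mconv_dirac' (ν : Measure M) [SFinite ν] (x : M) :
    ν ∗ₘ dirac x = ν.map (· * x) := by
  rw [mconv, map_congr (mul_ae_eq_prod_dirac ν x), prod_dirac,
    map_map (measurable_fst.mul_const x) measurable_prodMk_right]
  rfl

lemma smul_dirac_add_smul_dirac_mconv (c d : ℝ≥0∞) (x y : M) (ν : Measure M) [SFinite ν] :
    (c • dirac x + d • dirac y) ∗ₘ ν = c • ν.map (x * ·) + d • ν.map (y * ·) := by
  rw [add_mconv', mconv_smul_left, mconv_smul_left, dirac_mconv', dirac_mconv']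
  · rw [prod_smul_left]
    exact (aemeasurable_mul_dirac_prod x ν).smul_measure c
  · rw [prod_smul_left]
    exact (aemeasurable_mul_dirac_prod y ν).smul_measure d

lemma mconv_smul_dirac_add_smul_dirac (ν : Measure M) [SFinite ν] (c d : ℝ≥0∞) (x y : M) :
    ν ∗ₘ (c • dirac x + d • dirac y) = c • ν.map (· * x) + d • ν.map (· * y) := by
  rw [mconv_add', mconv_smul_right, mconv_smul_right, mconv_dirac', mconv_dirac']
  · rw [prod_smul_right]
    exact (aemeasurable_mul_prod_dirac ν x).smul_measure c
  · rw [prod_smul_right]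
    exact (aemeasurable_mul_prod_dirac ν y).smul_measure d

end Monoid

lemma sum_measureReal_singleton_le_one {α : Type*} [MeasurableSpace α] [MeasurableSingletonClass α]
    (ν : Measure α) [IsProbabilityMeasure ν] (s : Finset α) : ∑ x ∈ s, ν.real {x} ≤ 1 := by
  rw [sum_measureReal_singleton]
  exact measureReal_le_one

section Group

variable {G : Type*} [Group G] [MeasurableSpace G] [MeasurableMul G] [MeasurableSingletonClass G]

lemma measureReal_smul_dirac_add_smul_dirac_mconv_singleton {c d : ℝ≥0∞} (hc : c ≠ ∞)
    (hd : d ≠ ∞) (x y : G) (ν : Measure G) [IsFiniteMeasure ν] (z : G) :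
    ((c • dirac x + d • dirac y) ∗ₘ ν).real {z} =
      c.toReal * ν.real {x⁻¹ * z} + d.toReal * ν.real {y⁻¹ * z} := by
  rw [smul_dirac_add_smul_dirac_mconv, measureReal_def, add_apply, smul_apply, smul_apply,
    map_apply (measurable_const_mul x) (measurableSet_singleton z),
    map_apply (measurable_const_mul y) (measurableSet_singleton z),
    Set.preimage_mul_left_singleton, Set.preimage_mul_left_singleton,
    smul_eq_mul, smul_eq_mul, ENNReal.toReal_add (ENNReal.mul_ne_top hc (measure_ne_top _ _))
      (ENNReal.mul_ne_top hd (measure_ne_top _ _)), ENNReal.toReal_mul, ENNReal.toReal_mul]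
  rfl

lemma measureReal_mconv_smul_dirac_add_smul_dirac_singleton (ν : Measure G) [IsFiniteMeasure ν]
    {c d : ℝ≥0∞} (hc : c ≠ ∞) (hd : d ≠ ∞) (x y z : G) :
    (ν ∗ₘ (c • dirac x + d • dirac y)).real {z} =
      c.toReal * ν.real {z * x⁻¹} + d.toReal * ν.real {z * y⁻¹} := by
  rw [mconv_smul_dirac_add_smul_dirac, measureReal_def, add_apply, smul_apply, smul_apply,
    map_apply (measurable_mul_const x) (measurableSet_singleton z),
    map_apply (measurable_mul_const y) (measurableSet_singleton z),
    Set.preimage_mul_right_singleton, Set.preimage_mul_right_singleton,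
    smul_eq_mul, smul_eq_mul, ENNReal.toReal_add (ENNReal.mul_ne_top hc (measure_ne_top _ _))
      (ENNReal.mul_ne_top hd (measure_ne_top _ _)), ENNReal.toReal_mul, ENNReal.toReal_mul]
  rfl

end Group

end MeasureTheory.Measure

open Measure

theorem half_dirac_no_generalized_inverse_general {G : Type*} [Group G] [TopologicalSpace G]
    [IsTopologicalGroup G] [T2Space G] [MeasurableSpace G] [BorelSpace G]
    (a : G) (ha : a ^ 2 ≠ 1)
    (μ : Measure G)
    (hμ : μ = (2⁻¹ : ℝ≥0∞) • Measure.dirac (1 : G) + (2⁻¹ : ℝ≥0∞) • Measure.dirac a) :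
    ¬ ∃ ν : Measure G, IsProbabilityMeasure ν ∧ ν.Regular ∧ (μ ∗ₘ ν) ∗ₘ μ = μ := by
  rintro ⟨ν, hν, -, hgen⟩
  have ha₁ : a ≠ 1 := by rintro rfl; simp at ha
  have hμ_prob : IsProbabilityMeasure μ := ⟨by simp [hμ, ENNReal.inv_two_add_inv_two]⟩
  have hsandwich (z : G) : μ.real {z} = 4⁻¹ * (ν.real {z} + ν.real {a⁻¹ * z} +
      ν.real {z * a⁻¹} + ν.real {a⁻¹ * (z * a⁻¹)}) := by
    conv_lhs => rw [← hgen]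
    rw [hμ] at hμ_prob ⊢
    rw [measureReal_mconv_smul_dirac_add_smul_dirac_singleton _ (by simp) (by simp),
      measureReal_smul_dirac_add_smul_dirac_mconv_singleton (by simp) (by simp),
      measureReal_smul_dirac_add_smul_dirac_mconv_singleton (by simp) (by simp)]
    simp only [ENNReal.toReal_inv, ENNReal.toReal_ofNat, inv_one, mul_one, one_mul]
    ring
  have hμ₁ : μ.real {1} = 2⁻¹ := by simp [hμ, measureReal_def, ha₁]
  have hμa : μ.real {a} = 2⁻¹ := by simp [hμ, measureReal_def, ha₁.symm]
  have h_at_one := hsandwich 1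
  have h_at_a := hsandwich a
  simp only [mul_one, one_mul, inv_mul_cancel, mul_inv_cancel] at h_at_one h_at_a
  have hpair : ν.real {a} + ν.real {a⁻¹} ≤ 1 := by
    classical
    have hne : a ≠ a⁻¹ := by rwa [Ne, eq_inv_iff_mul_eq_one, ← sq]
    simpa [Finset.sum_pair hne] using sum_measureReal_singleton_le_one ν {a, a⁻¹}
  have htriple : ν.real {1} + ν.real {a⁻¹} + ν.real {a⁻¹ * a⁻¹} ≤ 1 := by
    classical
    have h_one : (1 : G) ∉ ({a⁻¹, a⁻¹ * a⁻¹} : Finset G) := by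
      simp [eq_comm (a := (1 : G)), ← sq, ha, ha₁]
    have hne : a⁻¹ ≠ a⁻¹ * a⁻¹ := by simpa using ha₁
    simpa [Finset.sum_insert h_one, Finset.sum_pair hne, add_assoc] using
      sum_measureReal_singleton_le_one ν {1, a⁻¹, a⁻¹ * a⁻¹}
  linarith [measureReal_nonneg (μ := ν) (s := {1}),
    measureReal_nonneg (μ := ν) (s := {a⁻¹ * a⁻¹})]

/-- If `a² ≠ e` in a compact Hausdorff topological group `G`, then
`μ = (1/2) δ_e + (1/2) δ_a` has no generalized inverse in `P(G)`. -/
theorem half_dirac_no_generalized_inverse {G : Type*} [Group G] [TopologicalSpace G]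
    [IsTopologicalGroup G] [CompactSpace G] [T2Space G] [MeasurableSpace G] [BorelSpace G]
    (a : G) (ha : a ^ 2 ≠ 1)
    (μ : Measure G)
    (hμ : μ = (2⁻¹ : ℝ≥0∞) • Measure.dirac (1 : G) + (2⁻¹ : ℝ≥0∞) • Measure.dirac a) :
    ¬ ∃ ν : Measure G, IsProbabilityMeasure ν ∧ ν.Regular ∧ (μ ∗ₘ ν) ∗ₘ μ = μ :=
  half_dirac_no_generalized_inverse_general a ha μ hμ
end

section
/- (Wendel) Let G be a compact Hausdorff topological group. A regular Borel probability measure μ on G is invertible in the convolution semigroup P(G) (i.e., there exists ν ∈ P(G) with μ ∗ ν = ν ∗ μ = δ_e) if and only if μ = δ_g for some g ∈ G. -/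
/-!
If `μ ∗ ν = δ₁`, then for `x` in the support of `μ` and `y` in the support of `ν` the product
`x * y` lies in the support of `δ₁ = {1}`. Regular measures have conull supports, so the support
of `ν` contains some `y`, the support of `μ` is contained in `{y⁻¹}`, and `μ = δ_{y⁻¹}`.
-/

open MeasureTheory Measure Filter

namespace MeasureTheory.Measure

variable {X : Type*} [TopologicalSpace X] [MeasurableSpace X]

theorem support_dirac [T1Space X] [OpensMeasurableSpace X] (a : X) :
    (dirac a).support = {a} := by
  ext x
  rw [mem_support_iff_forall, Set.mem_singleton_iff]
  refine ⟨fun h => ?_, ?_⟩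
  · by_contra hxa
    simpa using h {a}ᶜ (isOpen_compl_singleton.mem_nhds hxa)
  · rintro rfl U hU
    simp [mem_of_mem_nhds hU]

theorem regular_dirac [T1Space X] [OpensMeasurableSpace X] (a : X) : (dirac a).Regular where
  outerRegular A _ r hr := by
    by_cases haA : a ∈ A
    · exact ⟨Set.univ, Set.subset_univ A, isOpen_univ, by simpa [haA] using hr⟩
    · refine ⟨{a}ᶜ, Set.subset_compl_singleton_iff.2 haA, isOpen_compl_singleton, ?_⟩
      simpa [haA] using hr
  innerRegular U _ r hr := by
    have haU : a ∈ U := by by_contra h; simp [h] at hr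
    exact ⟨{a}, Set.singleton_subset_iff.2 haU, isCompact_singleton, by simpa [haU] using hr⟩

theorem eq_dirac_of_support_subset_singleton [T1Space X] [OpensMeasurableSpace X]
    {μ : Measure X} [IsProbabilityMeasure μ] [μ.Regular] {a : X} (h : μ.support ⊆ {a}) :
    μ = dirac a := by
  have hcompl : μ {a}ᶜ = 0 :=
    measure_mono_null (Set.compl_subset_compl.2 h) measure_compl_support_of_regular
  have ha : μ {a} = 1 := (prob_compl_eq_zero_iff (measurableSet_singleton a)).1 hcompl
  calc μ = μ.restrict {a} := (restrict_eq_self_of_ae_mem (mem_ae_iff.2 hcompl)).symm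
    _ = dirac a := by rw [restrict_singleton, ha, one_smul]

/-- Without `hmul` the convolution is the junk value `0`: multiplication is continuous, but the
product σ-algebra on `G × G` may be smaller than the Borel one. -/
theorem mul_mem_support_mconv {G : Type*} [Monoid G] [TopologicalSpace G] [ContinuousMul G]
    [MeasurableSpace G] {μ ν : Measure G} [SFinite ν]
    (hmul : AEMeasurable (fun p : G × G => p.1 * p.2) (μ.prod ν)) {x y : G}
    (hx : x ∈ μ.support) (hy : y ∈ ν.support) : x * y ∈ (μ ∗ₘ ν).support := by
  rw [mem_support_iff_forall] at hx hy ⊢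
  intro W hW
  obtain ⟨U, hU, V, hV, hUV⟩ :=
    mem_nhds_prod_iff.1 (continuous_mul.continuousAt.preimage_mem_nhds hW)
  calc 0 < μ U * ν V := ENNReal.mul_pos (hx U hU).ne' (hy V hV).ne'
    _ = μ.prod ν (U ×ˢ V) := (prod_prod U V).symm
    _ ≤ μ.prod ν ((fun p : G × G => p.1 * p.2) ⁻¹' W) := measure_mono hUV
    _ ≤ (μ ∗ₘ ν) W := le_map_apply hmul W

theorem dirac_mconv_dirac_of_measurableSingletonClass {G : Type*} [Monoid G] [MeasurableSpace G]
    [MeasurableSingletonClass G] (x y : G) : dirac x ∗ₘ dirac y = dirac (x * y) := by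
  rw [mconv, dirac_prod_dirac, map_dirac]

end MeasureTheory.Measure

theorem wendel_invertible_iff_dirac_general {G : Type*} [Group G] [TopologicalSpace G]
    [IsTopologicalGroup G] [T2Space G] [MeasurableSpace G] [BorelSpace G]
    (μ : Measure G) (hμ : IsProbabilityMeasure μ) (hμr : μ.Regular) :
    (∃ ν : Measure G, IsProbabilityMeasure ν ∧ ν.Regular ∧
        μ ∗ₘ ν = Measure.dirac (1 : G) ∧ ν ∗ₘ μ = Measure.dirac (1 : G)) ↔
      ∃ g : G, μ = Measure.dirac g := by
  constructor
  · rintro ⟨ν, hν, hνr, hμν, -⟩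
    obtain ⟨y, hy⟩ : ν.support.Nonempty := nonempty_of_mem support_mem_ae_of_regular
    have hmul : AEMeasurable (fun p : G × G => p.1 * p.2) (μ.prod ν) :=
      .of_map_ne_zero (hμν.trans_ne dirac_ne_zero)
    refine ⟨y⁻¹, eq_dirac_of_support_subset_singleton fun x hx => ?_⟩
    have hxy := mul_mem_support_mconv hmul hx hy
    rw [hμν, support_dirac, Set.mem_singleton_iff] at hxy
    exact eq_inv_of_mul_eq_one_left hxy
  · rintro ⟨g, rfl⟩
    exact ⟨dirac g⁻¹, inferInstance, regular_dirac g⁻¹,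
      by rw [dirac_mconv_dirac_of_measurableSingletonClass, mul_inv_cancel],
      by rw [dirac_mconv_dirac_of_measurableSingletonClass, inv_mul_cancel]⟩

/-- (Wendel) A regular Borel probability measure `μ` on a compact Hausdorff topological
group `G` is invertible in the convolution semigroup `P(G)` if and only if `μ` is a Dirac
measure `δ_g` for some `g ∈ G`. -/
theorem wendel_invertible_iff_dirac {G : Type*} [Group G] [TopologicalSpace G]
    [IsTopologicalGroup G] [CompactSpace G] [T2Space G] [MeasurableSpace G] [BorelSpace G]
    (μ : Measure G) (hμ : IsProbabilityMeasure μ) (hμr : μ.Regular) :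
    (∃ ν : Measure G, IsProbabilityMeasure ν ∧ ν.Regular ∧
        μ ∗ₘ ν = Measure.dirac (1 : G) ∧ ν ∗ₘ μ = Measure.dirac (1 : G)) ↔
      ∃ g : G, μ = Measure.dirac g :=
  wendel_invertible_iff_dirac_general μ hμ hμr
end
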